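/- Swapping two adjacent tasks that are out of FCFS order does not increase the makespan: if in an ordering task x immediately precedes task y and a_x ≥ a_y (arrival of x is at least arrival of y), then swapping x and y yields a makespan less than or equal to the original makespan. -/

import Mathlib

/-- Completion time of processing tasks in the given order, starting from time `C`. -/
def comp (a e : ℕ → ℝ) : ℝ → List ℕ → ℝ
  | C, [] => C
  | C, i :: l => comp a e (max C (a i) + e i) l

/-- Makespan of a queue of tasks (indices). -/
def makespan (a e : ℕ → ℝ) (l : List ℕ) : ℝ := comp a e 0 l

section Comp

variable (a e : ℕ → ℝ)

theorem comp_mono (l : List ℕ) : Monotone (comp a e · l) := by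
  induction l with
  | nil => exact fun _ _ h => h
  | cons i l ih => exact fun _ _ h => ih (by gcongr)

theorem comp_append (C : ℝ) (P L : List ℕ) :
    comp a e C (P ++ L) = comp a e (comp a e C P) L := by
  induction P generalizing C with
  | nil => rfl
  | cons i P ih => exact ih _

variable {a e}

/-- Serving `x` first, `y` can no longer cause idle time, so the pair finishes at
`max C (a x) + e x + e y`; serving `y` first finishes no later. -/
theorem comp_swap_le {x y : ℕ} (hxy : a y ≤ a x) (hx : 0 ≤ e x) (hy : 0 ≤ e y) (C : ℝ)
    (Q : List ℕ) : comp a e C (y :: x :: Q) ≤ comp a e C (x :: y :: Q) := by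
  refine comp_mono a e Q ?_
  have x_first : max (max C (a x) + e x) (a y) = max C (a x) + e x :=
    max_eq_left (by linarith [le_max_right C (a x)])
  calc max (max C (a y) + e y) (a x) + e x
      ≤ max C (a x) + e y + e x := by
        gcongr
        exact max_le (by gcongr) (by linarith [le_max_right C (a x)])
    _ = max (max C (a x) + e x) (a y) + e y := by rw [x_first]; ring

end Comp

theorem adjacent_swap_general (a e : ℕ → ℝ) (he : ∀ i, 0 ≤ e i)
    (P Q : List ℕ) (x y : ℕ) (hxy : a y ≤ a x) :
    makespan a e (P ++ y :: x :: Q) ≤ makespan a e (P ++ x :: y :: Q) := by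
  unfold makespan
  rw [comp_append, comp_append]
  exact comp_swap_le hxy (he x) (he y) _ Q

/-- swapping two adjacent tasks that are out of FCFS order (x immediately
precedes y but `a y ≤ a x`) does not increase the makespan. -/
theorem adjacent_swap (a e : ℕ → ℝ) (ha : ∀ i, 0 ≤ a i) (he : ∀ i, 0 ≤ e i)
    (P Q : List ℕ) (x y : ℕ) (hxy : a y ≤ a x) :
    makespan a e (P ++ y :: x :: Q) ≤ makespan a e (P ++ x :: y :: Q) :=
  adjacent_swap_general a e he P Q x y hxy
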